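/- Let n ≥ 3, 0 < α < 2, β = (4-2α)/n, and γ = α/2. Let (r,k) satisfy 1/r = (n-2)/(2n) + α/(2n) and 1/r − α/(4(n-1)) < 1/k < 1/r, and define k̃ by 1/k̃' = β/2 + 1/k (where k̃' = k̃/(k̃-1)); then 1/r' = β/2 + 1/r and 1/r < 1/k̃, so (1/r, 1/k̃) lies strictly inside the admissible quadrangle. For all measurable functions u, v on ℝⁿ × [0,∞) one has ‖ |x|^{-α} |u|^{β} v ‖_{L_t^2([0,∞); L_ρ^{r'} L_ω^{k̃'}(|x|^{r'γ}))} ≤ ‖u‖_{L_t^∞([0,∞); L²(ℝⁿ))}^{β} ‖v‖_{L_t^2([0,∞); L_ρ^{r} L_ω^{k}(|x|^{-rγ}))}, where r' = r/(r-1). -/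

import Mathlib

open MeasureTheory Real Set Metric Filter
open scoped ENNReal NNReal

noncomputable section

/-- Euclidean space `ℝⁿ`. -/
abbrev Euc (n : ℕ) := EuclideanSpace ℝ (Fin n)

/-- The surface measure on the unit sphere `S^{n-1} ⊆ ℝⁿ`. -/
noncomputable def sphereMeasure (n : ℕ) : Measure (Metric.sphere (0 : Euc n) 1) :=
  (volume : Measure (Euc n)).toSphere

/-- The Schrödinger propagator `e^{itΔ}` acting on functions, given by the explicit
oscillatory-integral kernel for `t ≠ 0`, and the identity for `t = 0`. -/
noncomputable def schrod (n : ℕ) (t : ℝ) (f : Euc n → ℂ) (x : Euc n) : ℂ :=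
  if t = 0 then f x
  else (4 * Real.pi * Complex.I * t) ^ (-(n : ℂ) / 2) *
      ∫ y : Euc n, Complex.exp (Complex.I * ((‖x - y‖ ^ 2 : ℝ) : ℂ) / (4 * (t : ℂ))) * f y

/-- The weighted mixed norm `‖u‖_{L_ρ^r L_ω^k(|x|^{-rγ})}
  = (∫_0^∞ (∫_{S^{n-1}} |ρ^{-γ} u(ρω)|^k dσ(ω))^{r/k} ρ^{n-1} dρ)^{1/r}`. -/
noncomputable def mixedNorm (n : ℕ) (γ r k : ℝ) (u : Euc n → ℂ) : ℝ≥0∞ :=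
  (∫⁻ ρ in Set.Ioi (0 : ℝ),
      (∫⁻ ω, ENNReal.ofReal (ρ ^ (-γ) * ‖u (ρ • (ω : Euc n))‖) ^ k ∂(sphereMeasure n)) ^ (r / k) *
        ENNReal.ofReal (ρ ^ ((n : ℝ) - 1))) ^ (1 / r)

/-- The space-time norm `‖u‖_{L_t^q(I; L_ρ^r L_ω^k(|x|^{-rγ}))}`. -/
noncomputable def stNorm (n : ℕ) (q γ r k : ℝ) (I : Set ℝ) (u : ℝ → Euc n → ℂ) : ℝ≥0∞ :=
  (∫⁻ t in I, mixedNorm n γ r k (u t) ^ q) ^ (1 / q)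

/-- The `L²(ℝⁿ)` norm. -/
noncomputable def l2Norm (n : ℕ) (f : Euc n → ℂ) : ℝ≥0∞ :=
  (∫⁻ x : Euc n, ENNReal.ofReal ‖f x‖ ^ (2 : ℝ)) ^ (1 / 2 : ℝ)

/-!
For fixed time this is Hölder's inequality in mixed norms, used twice: on the sphere with
`1/k̃' = β/2 + 1/k` and then in `ρ^{n-1} dρ` with `1/r' = β/2 + 1/r`. On `|x| = ρ` the weights
combine as `ρ^{α/2} |x|^{-α} = ρ^{-α/2}`, so the product to estimate is `|u|^β · ρ^{-α/2} |v|`, and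
`|u|^β` is measured in `L^{2/β}_ρ L^{2/β}_ω`, which by polar coordinates is `‖u‖_{L²}^β`.
Taking the `L²` norm in time and bounding `‖u(t)‖_{L²}` by its essential supremum concludes.
-/

section MixedLpNorm

variable {T X Y : Type*} [MeasurableSpace T] [MeasurableSpace X] [MeasurableSpace Y]

def mixedLpNorm (μ : Measure X) (ν : Measure Y) (r k : ℝ) (F : X → Y → ℝ≥0∞) : ℝ≥0∞ :=
  (∫⁻ x, (∫⁻ y, F x y ^ k ∂ν) ^ (r / k) ∂μ) ^ (1 / r)

theorem mixedLpNorm_congr_ae {μ : Measure X} {ν : Measure Y} {r k : ℝ} {F G : X → Y → ℝ≥0∞}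
    (h : ∀ᵐ x ∂μ, ∀ y, F x y = G x y) : mixedLpNorm μ ν r k F = mixedLpNorm μ ν r k G := by
  unfold mixedLpNorm
  congr 1
  refine lintegral_congr_ae ?_
  filter_upwards [h] with x hx
  simp only [hx]

theorem mixedLpNorm_rpow (μ : Measure X) (ν : Measure Y) {q β : ℝ} (hq : 0 < q) (hβ : 0 < β)
    (F : X → Y → ℝ≥0∞) :
    mixedLpNorm μ ν (q / β) (q / β) (fun x y => F x y ^ β) = mixedLpNorm μ ν q q F ^ β := by
  have hqβ : q / β ≠ 0 := (div_pos hq hβ).ne'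
  simp only [mixedLpNorm, ← ENNReal.rpow_mul, mul_div_cancel₀ q hβ.ne', div_self hqβ,
    div_self hq.ne', ENNReal.rpow_one]
  congr 1
  rw [one_div_div]; ring

theorem measurable_lintegral_rpow {ν : Measure Y} [SFinite ν] {F : X → Y → ℝ≥0∞}
    (hF : Measurable (Function.uncurry F)) (k : ℝ) :
    Measurable fun x => ∫⁻ y, F x y ^ k ∂ν :=
  (hF.pow_const k).lintegral_prod_right'

theorem measurable_mixedLpNorm {μ : Measure X} {ν : Measure Y} [SFinite μ] [SFinite ν]
    {F : T → X → Y → ℝ≥0∞} (hF : Measurable fun p : (T × X) × Y => F p.1.1 p.1.2 p.2)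
    (r k : ℝ) : Measurable fun t => mixedLpNorm μ ν r k (F t) :=
  (((measurable_lintegral_rpow (F := fun p : T × X => F p.1 p.2) hF k).pow_const
    (r / k)).lintegral_prod_right').pow_const _

theorem mixedLpNorm_mul_le (μ : Measure X) (ν : Measure Y) [SFinite ν] {p r k r' k' : ℝ}
    (hp : 0 < p) (hr : 0 < r) (hk : 0 < k) (hr' : 1 / r' = 1 / p + 1 / r)
    (hk' : 1 / k' = 1 / p + 1 / k) {F G : X → Y → ℝ≥0∞}
    (hF : Measurable (Function.uncurry F)) (hG : Measurable (Function.uncurry G)) :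
    mixedLpNorm μ ν r' k' (fun x y => F x y * G x y) ≤
      mixedLpNorm μ ν p p F * mixedLpNorm μ ν r k G := by
  have pos_lt {s q : ℝ} (hq : 0 < q) (hs : 1 / s = 1 / p + 1 / q) : 0 < s ∧ s < p := by
    have h1 : 0 < 1 / s := by rw [hs]; positivity
    have h2 : 1 / p < 1 / s := by rw [hs]; simpa using hq
    exact ⟨one_div_pos.mp h1, (one_div_lt_one_div hp (one_div_pos.mp h1)).mp h2⟩
  obtain ⟨hr'0, hr'p⟩ := pos_lt hr hr'
  obtain ⟨hk'0, hk'p⟩ := pos_lt hk hk'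
  set a := fun x => (∫⁻ y, F x y ^ p ∂ν) ^ (1 / p)
  set b := fun x => (∫⁻ y, G x y ^ k ∂ν) ^ (1 / k)
  have inner (x : X) : (∫⁻ y, (F x y * G x y) ^ k' ∂ν) ^ (r' / k') ≤ (a x * b x) ^ r' := by
    rw [← one_div_mul_eq_div, ENNReal.rpow_mul]
    gcongr
    exact ENNReal.lintegral_Lp_mul_le_Lq_mul_Lr hk'0 hk'p hk' ν
      (hF.comp measurable_prodMk_left).aemeasurable (hG.comp measurable_prodMk_left).aemeasurable
  have ha : Measurable a := (measurable_lintegral_rpow hF p).pow_const _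
  have hb : Measurable b := (measurable_lintegral_rpow hG k).pow_const _
  calc mixedLpNorm μ ν r' k' (fun x y => F x y * G x y)
      ≤ (∫⁻ x, (a x * b x) ^ r' ∂μ) ^ (1 / r') := by
        unfold mixedLpNorm; gcongr with x; exact inner x
    _ ≤ (∫⁻ x, a x ^ p ∂μ) ^ (1 / p) * (∫⁻ x, b x ^ r ∂μ) ^ (1 / r) :=
        ENNReal.lintegral_Lp_mul_le_Lq_mul_Lr hr'0 hr'p hr' μ ha.aemeasurable hb.aemeasurable
    _ = mixedLpNorm μ ν p p F * mixedLpNorm μ ν r k G := by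
        simp only [a, b, mixedLpNorm, ← ENNReal.rpow_mul, one_div_mul_eq_div]

end MixedLpNorm

theorem lintegral_eq_lintegral_Ioi_toSphere {E : Type*} [NormedAddCommGroup E]
    [NormedSpace ℝ E] [FiniteDimensional ℝ E] [MeasurableSpace E] [BorelSpace E] [Nontrivial E]
    (μ : Measure E) [μ.IsAddHaarMeasure] {h : E → ℝ≥0∞} (hh : Measurable h) :
    ∫⁻ x, h x ∂μ = ∫⁻ ρ in Ioi (0 : ℝ),
      ENNReal.ofReal (ρ ^ (Module.finrank ℝ E - 1)) * ∫⁻ ω, h (ρ • (ω : E)) ∂μ.toSphere := by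
  have hpolar : Measurable fun p : sphere (0 : E) 1 × Ioi (0 : ℝ) => h ((p.2 : ℝ) • (p.1 : E)) :=
    hh.comp (by fun_prop)
  calc ∫⁻ x, h x ∂μ
      = ∫⁻ x : ({0}ᶜ : Set E), h x ∂(μ.comap Subtype.val) := by
        rw [lintegral_subtype_comap (measurableSet_singleton 0).compl, restrict_compl_singleton]
    _ = ∫⁻ p, h ((p.2 : ℝ) • (p.1 : E))
          ∂(μ.toSphere.prod (Measure.volumeIoiPow (Module.finrank ℝ E - 1))) := by
        rw [← (μ.measurePreserving_homeomorphUnitSphereProd).lintegral_comp hpolar]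
        refine lintegral_congr fun x => ?_
        simp [smul_inv_smul₀ (norm_ne_zero_iff.2 x.2)]
    _ = ∫⁻ ρ, ∫⁻ ω, h ((ρ : ℝ) • (ω : E)) ∂μ.toSphere
          ∂(Measure.volumeIoiPow (Module.finrank ℝ E - 1)) :=
        lintegral_prod_symm _ hpolar.aemeasurable
    _ = _ := by
        rw [Measure.volumeIoiPow, lintegral_withDensity_eq_lintegral_mul_non_measurable _
          (by fun_prop) (ae_of_all _ fun _ => ENNReal.ofReal_lt_top)]
        exact lintegral_subtype_comap measurableSet_Ioi
          (fun ρ : ℝ => ENNReal.ofReal (ρ ^ (Module.finrank ℝ E - 1)) *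
            ∫⁻ ω, h (ρ • (ω : E)) ∂μ.toSphere)

def radialMeasure (n : ℕ) : Measure ℝ :=
  (volume.restrict (Ioi 0)).withDensity fun ρ => ENNReal.ofReal (ρ ^ ((n : ℝ) - 1))

instance (n : ℕ) : SFinite (radialMeasure n) := by
  unfold radialMeasure; infer_instance

instance (n : ℕ) : IsFiniteMeasure (sphereMeasure n) := by
  unfold sphereMeasure; infer_instance

theorem lintegral_radialMeasure (n : ℕ) (g : ℝ → ℝ≥0∞) :
    ∫⁻ ρ, g ρ ∂radialMeasure n = ∫⁻ ρ in Ioi (0 : ℝ), ENNReal.ofReal (ρ ^ ((n : ℝ) - 1)) * g ρ :=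
  lintegral_withDensity_eq_lintegral_mul_non_measurable _ (by fun_prop)
    (ae_of_all _ fun _ => ENNReal.ofReal_lt_top) g

theorem lintegral_eq_lintegral_radialMeasure_sphereMeasure {n : ℕ} (hn : 0 < n)
    {h : Euc n → ℝ≥0∞} (hh : Measurable h) :
    ∫⁻ x, h x = ∫⁻ ρ, ∫⁻ ω, h (ρ • (ω : Euc n)) ∂sphereMeasure n ∂radialMeasure n := by
  have : Nontrivial (Euc n) := by
    rw [← Module.finrank_pos_iff (R := ℝ), finrank_euclideanSpace_fin]; exact hn
  rw [lintegral_radialMeasure, lintegral_eq_lintegral_Ioi_toSphere volume hh,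
    finrank_euclideanSpace_fin]
  refine setLIntegral_congr_fun measurableSet_Ioi fun ρ _ => ?_
  rw [← Real.rpow_natCast, Nat.cast_pred hn]
  rfl

theorem mixedNorm_eq_mixedLpNorm (n : ℕ) (γ r k : ℝ) (u : Euc n → ℂ) :
    mixedNorm n γ r k u = mixedLpNorm (radialMeasure n) (sphereMeasure n) r k
      (fun ρ ω => ENNReal.ofReal (ρ ^ (-γ) * ‖u (ρ • (ω : Euc n))‖)) := by
  simp only [mixedNorm, mixedLpNorm, lintegral_radialMeasure, mul_comm]

theorem l2Norm_eq_mixedLpNorm {n : ℕ} (hn : 0 < n) {f : Euc n → ℂ} (hf : Measurable f) :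
    l2Norm n f = mixedLpNorm (radialMeasure n) (sphereMeasure n) 2 2
      (fun ρ ω => ENNReal.ofReal ‖f (ρ • (ω : Euc n))‖) := by
  rw [l2Norm, mixedLpNorm, lintegral_eq_lintegral_radialMeasure_sphereMeasure hn (by fun_prop)]
  simp only [div_self (two_ne_zero' ℝ), ENNReal.rpow_one]

theorem measurable_mixedNorm (n : ℕ) (γ r k : ℝ) {v : ℝ → Euc n → ℂ}
    (hv : Measurable (Function.uncurry v)) : Measurable fun t => mixedNorm n γ r k (v t) := by
  simp only [mixedNorm_eq_mixedLpNorm]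
  exact measurable_mixedLpNorm (by fun_prop) r k

theorem ae_radialMeasure_pos (n : ℕ) : ∀ᵐ ρ ∂radialMeasure n, 0 < ρ :=
  (withDensity_absolutelyContinuous _ _).ae_le (ae_restrict_mem measurableSet_Ioi)

theorem mixedNorm_weighted_mul_le {n : ℕ} (hn : 0 < n) {α β r k r' k' : ℝ} (hβ : 0 < β)
    (hr : 0 < r) (hk : 0 < k) (hr' : 1 / r' = β / 2 + 1 / r) (hk' : 1 / k' = β / 2 + 1 / k)
    {f g : Euc n → ℂ} (hf : Measurable f) (hg : Measurable g) :
    mixedNorm n (-(α / 2)) r' k' (fun x => ((‖x‖ ^ (-α) * ‖f x‖ ^ β : ℝ) : ℂ) * g x) ≤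
      l2Norm n f ^ β * mixedNorm n (α / 2) r k g := by
  have hp : 1 / (2 / β) = β / 2 := one_div_div 2 β
  rw [mixedNorm_eq_mixedLpNorm, mixedNorm_eq_mixedLpNorm, l2Norm_eq_mixedLpNorm hn hf,
    ← mixedLpNorm_rpow _ _ two_pos hβ]
  calc _ = mixedLpNorm (radialMeasure n) (sphereMeasure n) r' k' fun ρ ω =>
          ENNReal.ofReal ‖f (ρ • (ω : Euc n))‖ ^ β *
            ENNReal.ofReal (ρ ^ (-(α / 2)) * ‖g (ρ • (ω : Euc n))‖) := by
        refine mixedLpNorm_congr_ae ((ae_radialMeasure_pos n).mono fun ρ hρ ω => ?_)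
        have hx : ‖ρ • (ω : Euc n)‖ = ρ := by
          rw [norm_smul, norm_eq_of_mem_sphere ω, mul_one, Real.norm_of_nonneg hρ.le]
        have hweight : ρ ^ (α / 2) * ρ ^ (-α) = ρ ^ (-(α / 2)) := by
          rw [← Real.rpow_add hρ]; ring_nf
        rw [neg_neg, norm_mul, Complex.norm_real, Real.norm_of_nonneg (by positivity), hx,
          ENNReal.ofReal_rpow_of_nonneg (norm_nonneg _) hβ.le,
          ← ENNReal.ofReal_mul (by positivity), ← hweight]
        ring_nf
    _ ≤ _ := mixedLpNorm_mul_le _ _ (div_pos two_pos hβ) hr hk (by rw [hp, hr'])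
        (by rw [hp, hk']) (by fun_prop) (by fun_prop)

theorem lintegral_rpow_le_essSup_rpow_mul {T : Type*} [MeasurableSpace T] {μ : Measure T}
    {A B C : T → ℝ≥0∞} {q β : ℝ} (hq : 0 < q) (hβ : 0 ≤ β) (hC : AEMeasurable C μ)
    (h : ∀ᵐ t ∂μ, A t ≤ B t ^ β * C t) :
    (∫⁻ t, A t ^ q ∂μ) ^ (1 / q) ≤ essSup B μ ^ β * (∫⁻ t, C t ^ q ∂μ) ^ (1 / q) := by
  calc (∫⁻ t, A t ^ q ∂μ) ^ (1 / q)
      ≤ (∫⁻ t, (essSup B μ ^ β * C t) ^ q ∂μ) ^ (1 / q) := by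
        gcongr ?_ ^ _
        refine lintegral_mono_ae ?_
        filter_upwards [h, ENNReal.ae_le_essSup B] with t hA hB
        gcongr
        exact hA.trans (by gcongr)
    _ = essSup B μ ^ β * (∫⁻ t, C t ^ q ∂μ) ^ (1 / q) := by
        simp_rw [ENNReal.mul_rpow_of_nonneg _ _ hq.le]
        rw [lintegral_const_mul'' _ (hC.pow_const q),
          ENNReal.mul_rpow_of_nonneg _ _ (by positivity), ← ENNReal.rpow_mul, ← ENNReal.rpow_mul,
          mul_one_div_cancel hq.ne', mul_one]

/-- Lemma 4.1, nonlinear Hölder estimate: with `γ = α/2`,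
`β = (4-2α)/n`, `1/r = (n-2)/(2n) + α/(2n)`, `1/r - α/(4(n-1)) < 1/k < 1/r`, and `k̃`
defined by `1/k̃' = β/2 + 1/k`, one has `1/r' = β/2 + 1/r`, `1/r < 1/k̃`, and
`‖ |x|^{-α} |u|^β v ‖_{L_t^2([0,∞); L_ρ^{r'} L_ω^{k̃'}(|x|^{r'γ}))}
  ≤ ‖u‖_{L_t^∞([0,∞); L²)}^β ‖v‖_{L_t^2([0,∞); L_ρ^r L_ω^k(|x|^{-rγ}))}`. -/
theorem nonlinear_holder_estimate
    (n : ℕ) (hn : 3 ≤ n) (α β r k kt : ℝ)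
    (hα0 : 0 < α) (hα2 : α < 2) (hβ : β = (4 - 2 * α) / n)
    (hr : 1 / r = ((n : ℝ) - 2) / (2 * n) + α / (2 * n))
    (hk1 : 1 / r - α / (4 * ((n : ℝ) - 1)) < 1 / k) (hk2 : 1 / k < 1 / r)
    (hkt : 1 / (kt / (kt - 1)) = β / 2 + 1 / k) :
    1 / (r / (r - 1)) = β / 2 + 1 / r ∧ 1 / r < 1 / kt ∧
    ∀ u v : ℝ → Euc n → ℂ,
      Measurable (Function.uncurry u) → Measurable (Function.uncurry v) →
      stNorm n 2 (-(α / 2)) (r / (r - 1)) (kt / (kt - 1)) (Set.Ici 0)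
          (fun t x => ((‖x‖ ^ (-α) * ‖u t x‖ ^ β : ℝ) : ℂ) * v t x) ≤
        (essSup (fun t => l2Norm n (u t)) (volume.restrict (Set.Ici 0))) ^ β *
          stNorm n 2 (α / 2) r k (Set.Ici 0) v := by
  have hn3 : (3 : ℝ) ≤ n := by exact_mod_cast hn
  have hβ0 : 0 < β := by rw [hβ]; exact div_pos (by linarith) (by linarith)
  have hβr : β / 2 + 2 * (1 / r) = 1 := by rw [hβ, hr]; field_simp; ring
  have hαr : α / (4 * ((n : ℝ) - 1)) < 1 / r := by
    have : α / (4 * ((n : ℝ) - 1)) < α / (2 * n) :=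
      div_lt_div_of_pos_left hα0 (by linarith) (by linarith)
    rw [hr]
    linarith [div_nonneg (by linarith : (0 : ℝ) ≤ n - 2) (by linarith : (0 : ℝ) ≤ 2 * n)]
  have hα4 : 0 < α / (4 * ((n : ℝ) - 1)) := div_pos hα0 (by linarith)
  have hr0 : 0 < r := one_div_pos.mp (by linarith)
  have hk0 : 0 < k := one_div_pos.mp (by linarith)
  have hr' : 1 / (r / (r - 1)) = β / 2 + 1 / r := by
    rw [one_div_div, sub_div, div_self hr0.ne']; linarith
  have hkt' : 1 / r < 1 / kt := by
    have hkt0 : kt ≠ 0 := by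
      rintro rfl
      rw [zero_div, div_zero] at hkt
      linarith [one_div_pos.mpr hk0]
    rw [one_div_div, sub_div, div_self hkt0] at hkt
    linarith
  refine ⟨hr', hkt', fun u v hu hv => ?_⟩
  exact lintegral_rpow_le_essSup_rpow_mul two_pos hβ0.le
    (measurable_mixedNorm n _ r k hv).aemeasurable (ae_of_all _ fun t =>
      mixedNorm_weighted_mul_le (by omega) hβ0 hr0 hk0 hr' hkt
        (hu.comp measurable_prodMk_left) (hv.comp measurable_prodMk_left))
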